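/- Let A ∈ ℂ^{m×n_a} and B ∈ ℂ^{m×n_b} both have unit ℓ2-norm columns, with coherences at most μ_a and μ_b respectively and mutual coherence at most μ_m. Let X ⊆ {1,…,n_a} with |X| = n_x, E ⊆ {1,…,n_b} with |E| = n_e, set D_{X,E} = [A_X B_E], and suppose there exists λ > 0 with ‖D_{X,E} v‖₂ ≥ λ·‖v‖₂ for all v. If max{ √(μ_a²·n_x + μ_m²·n_e), √(μ_m²·n_x + μ_b²·n_e) } < λ, then no column of A indexed outside X and no column of B indexed outside E lies in the column space of D_{X,E}. -/

import Mathlib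

/-!
If a unit column `a` of `A` or `B` outside `X`, `E` were `D v` with `D = D_{X,E}`, then
`1 = ⟨a, D v⟩ = ⟨D^* a, v⟩ ≤ ‖D^* a‖ ‖v‖`, while `λ ‖v‖ ≤ ‖D v‖ = 1`. The entries of `D^* a` are
inner products of `a` with other columns, so the coherence bounds give
`‖D^* a‖ ≤ √(μ² n_x + μ'² n_e) < λ`, a contradiction.
-/

open scoped Matrix

noncomputable def e2norm {ι : Type*} [Fintype ι] (v : ι → ℂ) : ℝ :=
  Real.sqrt (∑ i, ‖v i‖ ^ 2)

def subCols {m n : ℕ} (M : Matrix (Fin m) (Fin n) ℂ) (S : Finset (Fin n)) :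
    Matrix (Fin m) ↥S ℂ := M.submatrix id (fun j => (j : Fin n))

section e2norm

variable {ι κ : Type*} [Fintype ι] [Fintype κ]

theorem e2norm_nonneg (v : ι → ℂ) : 0 ≤ e2norm v := Real.sqrt_nonneg _

theorem norm_dotProduct_le_e2norm_mul (v w : ι → ℂ) :
    ‖v ⬝ᵥ w‖ ≤ e2norm v * e2norm w :=
  calc ‖v ⬝ᵥ w‖ ≤ ∑ i, ‖v i‖ * ‖w i‖ := by
        simpa only [dotProduct, norm_mul] using norm_sum_le Finset.univ fun i => v i * w i
    _ ≤ e2norm v * e2norm w := Real.sum_mul_le_sqrt_mul_sqrt _ _ _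

theorem star_dotProduct_self_eq_one {v : ι → ℂ} (hv : ∑ i, ‖v i‖ ^ 2 = 1) :
    star v ⬝ᵥ v = 1 := by
  have hsq : ∀ i, star (v i) * v i = ((‖v i‖ ^ 2 : ℝ) : ℂ) := fun i => by
    rw [← Complex.normSq_eq_norm_sq, Complex.normSq_eq_conj_mul_self, Complex.star_def]
  simp only [dotProduct, Pi.star_apply, hsq, ← Complex.ofReal_sum, hv, Complex.ofReal_one]

theorem e2norm_eq_one {v : ι → ℂ} (hv : ∑ i, ‖v i‖ ^ 2 = 1) : e2norm v = 1 := by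
  rw [e2norm, hv, Real.sqrt_one]

theorem sum_norm_sq_le_card_mul {v : ι → ℂ} {α : ℝ} (hv : ∀ i, ‖v i‖ ≤ α) :
    ∑ i, ‖v i‖ ^ 2 ≤ α ^ 2 * Fintype.card ι := by
  calc ∑ i, ‖v i‖ ^ 2 ≤ ∑ _i : ι, α ^ 2 :=
        Finset.sum_le_sum fun i _ => pow_le_pow_left₀ (norm_nonneg _) (hv i) 2
    _ = α ^ 2 * Fintype.card ι := by simp [mul_comm]

theorem e2norm_sum_type_le {v : ι ⊕ κ → ℂ} {α β : ℝ} (hι : ∀ i, ‖v (Sum.inl i)‖ ≤ α)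
    (hκ : ∀ k, ‖v (Sum.inr k)‖ ≤ β) :
    e2norm v ≤ Real.sqrt (α ^ 2 * Fintype.card ι + β ^ 2 * Fintype.card κ) := by
  rw [e2norm, Fintype.sum_sum_type]
  exact Real.sqrt_le_sqrt
    (add_le_add (sum_norm_sq_le_card_mul hι) (sum_norm_sq_le_card_mul hκ))

end e2norm

theorem not_exists_mulVec_eq_of_e2norm_vecMul_lt {n ι : Type*} [Fintype n] [Fintype ι]
    {D : Matrix n ι ℂ} {a : n → ℂ} {l : ℝ} (hD : ∀ v, l * e2norm v ≤ e2norm (D *ᵥ v))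
    (ha : ∑ k, ‖a k‖ ^ 2 = 1) (hc : e2norm (star a ᵥ* D) < l) :
    ¬ ∃ v, D *ᵥ v = a := by
  rintro ⟨v, rfl⟩
  have hbelow : l * e2norm v ≤ 1 := (hD v).trans_eq (e2norm_eq_one ha)
  have habove : 1 ≤ e2norm (star (D *ᵥ v) ᵥ* D) * e2norm v := by
    calc (1 : ℝ) = ‖star (D *ᵥ v) ⬝ᵥ D *ᵥ v‖ := by
          rw [star_dotProduct_self_eq_one ha, norm_one]
      _ = ‖(star (D *ᵥ v) ᵥ* D) ⬝ᵥ v‖ := by rw [Matrix.dotProduct_mulVec]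
      _ ≤ _ := norm_dotProduct_le_e2norm_mul _ _
  rcases (e2norm_nonneg v).eq_or_lt with hv | hv
  · rw [← hv, mul_zero] at habove
    exact zero_lt_one.not_ge habove
  · linarith [mul_lt_mul_of_pos_right hc hv]

theorem norm_sum_conj_mul_comm {n : Type*} [Fintype n] (u w : n → ℂ) :
    ‖∑ k, starRingEnd ℂ (u k) * w k‖ = ‖∑ k, starRingEnd ℂ (w k) * u k‖ := by
  rw [← Complex.norm_conj, map_sum]
  simp only [map_mul, Complex.conj_conj, mul_comm]

theorem stmt12_general {m na nb : ℕ} (A : Matrix (Fin m) (Fin na) ℂ) (B : Matrix (Fin m) (Fin nb) ℂ)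
    (μa μb μm : ℝ)
    (hunitA : ∀ j, ∑ i, ‖A i j‖ ^ 2 = 1)
    (hunitB : ∀ j, ∑ i, ‖B i j‖ ^ 2 = 1)
    (hcohA : ∀ i j, i ≠ j → ‖∑ k, (starRingEnd ℂ) (A k i) * A k j‖ ≤ μa)
    (hcohB : ∀ i j, i ≠ j → ‖∑ k, (starRingEnd ℂ) (B k i) * B k j‖ ≤ μb)
    (hmut : ∀ i j, ‖∑ k, (starRingEnd ℂ) (A k i) * B k j‖ ≤ μm)
    (X : Finset (Fin na)) (E : Finset (Fin nb)) (nx ne : ℕ)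
    (hX : X.card = nx) (hE : E.card = ne)
    (l : ℝ)
    (hD : ∀ v : ↥X ⊕ ↥E → ℂ,
      l * e2norm v ≤ e2norm ((Matrix.fromCols (subCols A X) (subCols B E)).mulVec v))
    (hlt : max (Real.sqrt (μa ^ 2 * nx + μm ^ 2 * ne))
        (Real.sqrt (μm ^ 2 * nx + μb ^ 2 * ne)) < l) :
    (∀ γ : Fin na, γ ∉ X →
      ¬ ∃ v : ↥X ⊕ ↥E → ℂ,
          (Matrix.fromCols (subCols A X) (subCols B E)).mulVec v = (fun i => A i γ)) ∧
    (∀ γ : Fin nb, γ ∉ E →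
      ¬ ∃ v : ↥X ⊕ ↥E → ℂ,
          (Matrix.fromCols (subCols A X) (subCols B E)).mulVec v = (fun i => B i γ)) := by
  have hcard : (Fintype.card X : ℝ) = nx ∧ (Fintype.card E : ℝ) = ne := by simp [hX, hE]
  constructor
  · intro γ hγ
    refine not_exists_mulVec_eq_of_e2norm_vecMul_lt hD (hunitA γ) ?_
    refine lt_of_le_of_lt
      (e2norm_sum_type_le (α := μa) (β := μm) (fun x => hcohA γ x ?_) (hmut γ ·)) ?_
    · exact fun h => hγ (h ▸ x.2)
    · simpa only [hcard] using (le_max_left _ _).trans_lt hlt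
  · intro γ hγ
    refine not_exists_mulVec_eq_of_e2norm_vecMul_lt hD (hunitB γ) ?_
    refine lt_of_le_of_lt
      (e2norm_sum_type_le (α := μm) (β := μb) (fun x => ?_) (fun y => hcohB γ y ?_)) ?_
    · exact (norm_sum_conj_mul_comm _ _).trans_le (hmut x γ)
    · exact fun h => hγ (h ▸ y.2)
    · simpa only [hcard] using (le_max_right _ _).trans_lt hlt

/-- under the coherence bounds and the lower singular-value bound
`‖D_{X,E} v‖₂ ≥ λ ‖v‖₂`, if `max{√(μa² n_x + μm² n_e), √(μm² n_x + μb² n_e)} < λ`, then no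
column of `A` indexed outside `X` and no column of `B` indexed outside `E` lies in the
column space of `D_{X,E} = [A_X B_E]`. -/
theorem stmt12 {m na nb : ℕ} (A : Matrix (Fin m) (Fin na) ℂ) (B : Matrix (Fin m) (Fin nb) ℂ)
    (μa μb μm : ℝ)
    (hunitA : ∀ j, ∑ i, ‖A i j‖ ^ 2 = 1)
    (hunitB : ∀ j, ∑ i, ‖B i j‖ ^ 2 = 1)
    (hcohA : ∀ i j, i ≠ j → ‖∑ k, (starRingEnd ℂ) (A k i) * A k j‖ ≤ μa)
    (hcohB : ∀ i j, i ≠ j → ‖∑ k, (starRingEnd ℂ) (B k i) * B k j‖ ≤ μb)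
    (hmut : ∀ i j, ‖∑ k, (starRingEnd ℂ) (A k i) * B k j‖ ≤ μm)
    (X : Finset (Fin na)) (E : Finset (Fin nb)) (nx ne : ℕ)
    (hX : X.card = nx) (hE : E.card = ne)
    (l : ℝ) (hl : 0 < l)
    (hD : ∀ v : ↥X ⊕ ↥E → ℂ,
      l * e2norm v ≤ e2norm ((Matrix.fromCols (subCols A X) (subCols B E)).mulVec v))
    (hlt : max (Real.sqrt (μa ^ 2 * nx + μm ^ 2 * ne))
        (Real.sqrt (μm ^ 2 * nx + μb ^ 2 * ne)) < l) :
    (∀ γ : Fin na, γ ∉ X →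
      ¬ ∃ v : ↥X ⊕ ↥E → ℂ,
          (Matrix.fromCols (subCols A X) (subCols B E)).mulVec v = (fun i => A i γ)) ∧
    (∀ γ : Fin nb, γ ∉ E →
      ¬ ∃ v : ↥X ⊕ ↥E → ℂ,
          (Matrix.fromCols (subCols A X) (subCols B E)).mulVec v = (fun i => B i γ)) :=
  stmt12_general A B μa μb μm hunitA hunitB hcohA hcohB hmut X E nx ne hX hE l hD hlt
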